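/- arXiv:0805.3777 — 3 statements merged into one kernel-verified Lean document; each statement's English description precedes it below -/
import Mathlib

section
/- Let F be a field and let T be a 3-tensor in F^{m1×m2×m3} with slices T_1,...,T_{m3} ∈ F^{m1×m2} (where (T_k)_{ij} = t_{ijk}). Then the rank of T (the minimal number of rank-one tensors summing to T) equals the minimal dimension of a subspace of F^{m1×m2} that is spanned by rank-one matrices and contains span(T_1,...,T_{m3}). -/
open scoped BigOperators

/-- The rank of a 3-tensor: the minimal number of rank-one tensors summing to it. -/
noncomputable def trank {F : Type*} [Field F] {m1 m2 m3 : ℕ}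
    (T : Fin m1 → Fin m2 → Fin m3 → F) : ℕ :=
  sInf {k | ∃ (x : Fin k → Fin m1 → F) (y : Fin k → Fin m2 → F) (z : Fin k → Fin m3 → F),
    ∀ i j l, T i j l = ∑ s, x s i * y s j * z s l}

/-- A rank-one matrix `x yᵀ` with `x, y` nonzero. -/
def IsRankOneMat {F : Type*} [Field F] {m n : ℕ} (A : Matrix (Fin m) (Fin n) F) : Prop :=
  ∃ (x : Fin m → F) (y : Fin n → F), x ≠ 0 ∧ y ≠ 0 ∧ A = Matrix.of fun i j => x i * y j

/-!
A decomposition `T = ∑ₛ xₛ ⊗ yₛ ⊗ zₛ` says exactly that every slice `T_l = ∑ₛ zₛ(l) • xₛ yₛᵀ`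
lies in the span of the `k` rank-one matrices `xₛ yₛᵀ`, a space of dimension at most `k`.
Conversely, a space spanned by rank-one matrices has a basis of rank-one matrices `uₛ vₛᵀ`,
and the coordinates of the slices in that basis supply the third factors `zₛ`.
-/

open Matrix

section TensorRank

variable {F : Type*} [Field F] {m1 m2 m3 : ℕ}

def tensorSlice (T : Fin m1 → Fin m2 → Fin m3 → F) (l : Fin m3) : Matrix (Fin m1) (Fin m2) F :=
  of fun i j => T i j l

lemma isRankOneMat_vecMulVec_of_ne_zero {x : Fin m1 → F} {y : Fin m2 → F}
    (h : vecMulVec x y ≠ 0) : IsRankOneMat (vecMulVec x y) := by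
  refine ⟨x, y, ?_, ?_, rfl⟩ <;> rintro rfl <;> exact h (by ext; simp [vecMulVec])

lemma span_setOf_isRankOneMat :
    Submodule.span F {A : Matrix (Fin m1) (Fin m2) F | IsRankOneMat A} = ⊤ := by
  refine eq_top_iff.2 ((stdBasis F _ _).span_eq.symm.le.trans (Submodule.span_mono ?_))
  rintro _ ⟨⟨i, j⟩, rfl⟩
  have h := (stdBasis F (Fin m1) (Fin m2)).ne_zero (i, j)
  rw [stdBasis_eq_single, single_eq_single_vecMulVec_single] at h ⊢
  exact isRankOneMat_vecMulVec_of_ne_zero h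

def IsSumOfRankOneTensors (T : Fin m1 → Fin m2 → Fin m3 → F) (k : ℕ) : Prop :=
  ∃ (x : Fin k → Fin m1 → F) (y : Fin k → Fin m2 → F) (z : Fin k → Fin m3 → F),
    ∀ i j l, T i j l = ∑ s, x s i * y s j * z s l

lemma isSumOfRankOneTensors_card {ι : Type*} [Fintype ι] {T : Fin m1 → Fin m2 → Fin m3 → F}
    (x : ι → Fin m1 → F) (y : ι → Fin m2 → F) (z : ι → Fin m3 → F)
    (hT : ∀ i j l, T i j l = ∑ s, x s i * y s j * z s l) :
    IsSumOfRankOneTensors T (Fintype.card ι) := by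
  let e := (Fintype.equivFin ι).symm
  exact ⟨x ∘ e, y ∘ e, z ∘ e, fun i j l =>
    (hT i j l).trans (e.sum_comp fun s => x s i * y s j * z s l).symm⟩

lemma tensorSlice_eq_sum {ι : Type*} [Fintype ι] {T : Fin m1 → Fin m2 → Fin m3 → F}
    (x : ι → Fin m1 → F) (y : ι → Fin m2 → F) (z : ι → Fin m3 → F)
    (hT : ∀ i j l, T i j l = ∑ s, x s i * y s j * z s l) (l : Fin m3) :
    tensorSlice T l = ∑ s, z s l • vecMulVec (x s) (y s) := by
  ext i j
  simp only [tensorSlice, of_apply, hT, Matrix.sum_apply, Matrix.smul_apply, vecMulVec_apply,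
    smul_eq_mul]
  exact Finset.sum_congr rfl fun s _ => by ring

lemma exists_rankOne_span_of_isSumOfRankOneTensors
    {T : Fin m1 → Fin m2 → Fin m3 → F} {k : ℕ} (hT : IsSumOfRankOneTensors T k) :
    ∃ S : Set (Matrix (Fin m1) (Fin m2) F), (∀ A ∈ S, IsRankOneMat A) ∧
      Submodule.span F (Set.range (tensorSlice T)) ≤ Submodule.span F S ∧
      Module.finrank F (Submodule.span F S) ≤ k := by
  obtain ⟨x, y, z, hT⟩ := hT
  let M := fun s => vecMulVec (x s) (y s)
  refine ⟨Set.range M \ {0}, ?_, ?_, ?_⟩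
  · rintro _ ⟨⟨s, rfl⟩, hs⟩
    exact isRankOneMat_vecMulVec_of_ne_zero hs
  · rw [Submodule.span_sdiff_singleton_zero, Submodule.span_le]
    rintro _ ⟨l, rfl⟩
    exact Submodule.mem_span_range_iff_exists_fun F |>.2 ⟨_, (tensorSlice_eq_sum x y z hT l).symm⟩
  · rw [Submodule.span_sdiff_singleton_zero]
    exact (finrank_range_le_card M).trans_eq (Fintype.card_fin k)

lemma isSumOfRankOneTensors_finrank_span {T : Fin m1 → Fin m2 → Fin m3 → F}
    {S : Set (Matrix (Fin m1) (Fin m2) F)} (hS : ∀ A ∈ S, IsRankOneMat A)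
    (hT : Submodule.span F (Set.range (tensorSlice T)) ≤ Submodule.span F S) :
    IsSumOfRankOneTensors T (Module.finrank F (Submodule.span F S)) := by
  obtain ⟨b, hbS, hbspan, hbli⟩ := exists_linearIndependent F S
  have : Fintype b := hbli.setFinite.fintype
  rw [← hbspan, finrank_span_set_eq_card hbli, Set.toFinset_card]
  choose u v _ _ huv using fun A : b => hS A (hbS A.2)
  have hslice (l : Fin m3) : ∃ c : b → F, ∑ A, c A • (A : Matrix _ _ F) = tensorSlice T l := by
    rw [← Submodule.mem_span_range_iff_exists_fun, Subtype.range_coe, hbspan]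
    exact hT (Submodule.subset_span ⟨l, rfl⟩)
  choose c hc using hslice
  refine isSumOfRankOneTensors_card u v (fun A l => c l A) fun i j l => ?_
  change tensorSlice T l i j = _
  rw [← hc l, Matrix.sum_apply]
  refine Finset.sum_congr rfl fun A _ => ?_
  rw [Matrix.smul_apply, huv A, of_apply, smul_eq_mul]
  ring

lemma isSumOfRankOneTensors_trank (T : Fin m1 → Fin m2 → Fin m3 → F) :
    IsSumOfRankOneTensors T (trank T) := by
  have h := isSumOfRankOneTensors_finrank_span (T := T) (fun A hA => hA)
    (span_setOf_isRankOneMat (F := F) ▸ le_top)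
  exact Nat.sInf_mem (s := {k | IsSumOfRankOneTensors T k}) ⟨_, h⟩

end TensorRank

theorem stmt_0 {F : Type*} [Field F] {m1 m2 m3 : ℕ}
    (T : Fin m1 → Fin m2 → Fin m3 → F) :
    trank T = sInf {d | ∃ (S : Set (Matrix (Fin m1) (Fin m2) F)),
      (∀ A ∈ S, IsRankOneMat A) ∧
      Submodule.span F
        (Set.range fun k : Fin m3 => (Matrix.of fun i j => T i j k : Matrix (Fin m1) (Fin m2) F))
        ≤ Submodule.span F S ∧
      Module.finrank F (Submodule.span F S) = d} := by
  apply le_antisymm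
  · refine le_csInf ⟨_, {A | IsRankOneMat A}, fun _ h => h, ?_, rfl⟩ ?_
    · exact span_setOf_isRankOneMat (F := F) ▸ le_top
    · rintro _ ⟨S, hS, hT, rfl⟩
      exact Nat.sInf_le (isSumOfRankOneTensors_finrank_span hS hT)
  · obtain ⟨S, hS, hT, hd⟩ :=
      exists_rankOne_span_of_isSumOfRankOneTensors (isSumOfRankOneTensors_trank T)
    refine (Nat.sInf_le ?_).trans hd
    exact ⟨S, hS, hT, rfl⟩
end

section
/- Let A, B ∈ F^{m×m} with A invertible and A^{-1}B diagonalizable over F. Then there exist m rank-one matrices R_1, ..., R_m ∈ F^{m×m} such that both A and B lie in span(R_1, ..., R_m). Consequently the 3-tensor in F^{m×m×2} with slices A and B has rank at most m. -/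
open Matrix
open scoped BigOperators

/-! If `A⁻¹ B = P D P⁻¹` with `D` diagonal, put `U = A P` and `V = P⁻¹`. Then `A = U V` and
`B = U D V`, so `A` and `B` are combinations, with coefficients `1` and `D s s`, of the
rank-one matrices (column `s` of `U`) ⊗ (row `s` of `V`), which are nonzero because `U` and `V`
are invertible. The same sum exhibits the tensor with slices `A, B` as a sum of the `m` rank-one
tensors (column `s` of `U`) ⊗ (row `s` of `V`) ⊗ `(1, D s s)`. -/

namespace Matrix

variable {l m n R K : Type*}

theorem eq_zero_of_rank_eq_zero [Fintype n] [Field K] {M : Matrix m n K} (h : M.rank = 0) :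
    M = 0 := by
  classical
  rwa [Matrix.rank, Submodule.finrank_eq_zero, LinearMap.range_eq_bot, ← Matrix.toLin'_apply',
    LinearEquiv.map_eq_zero_iff] at h

theorem rank_vecMulVec_of_ne_zero [Fintype n] [Field K] {w : m → K} {v : n → K}
    (hw : w ≠ 0) (hv : v ≠ 0) : (vecMulVec w v).rank = 1 := by
  refine le_antisymm (rank_vecMulVec_le w v) (Nat.one_le_iff_ne_zero.2 fun h => ?_)
  obtain ⟨i, hi⟩ := Function.ne_iff.1 hw
  obtain ⟨j, hj⟩ := Function.ne_iff.1 hv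
  exact mul_ne_zero hi hj congr($(eq_zero_of_rank_eq_zero h) i j)

theorem row_ne_zero_of_isUnit [Fintype n] [DecidableEq n] [CommRing R] [Nontrivial R]
    {M : Matrix n n R} (hM : IsUnit M) (i : n) : M i ≠ 0 := fun h =>
  ((isUnit_iff_isUnit_det M).1 hM).ne_zero (det_eq_zero_of_row_eq_zero i (congrFun h))

theorem transpose_ne_zero_of_isUnit [Fintype n] [DecidableEq n] [CommRing R] [Nontrivial R]
    {M : Matrix n n R} (hM : IsUnit M) (j : n) : Mᵀ j ≠ 0 :=
  row_ne_zero_of_isUnit ((isUnit_transpose M).2 hM) j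

theorem mul_diagonal_mul_eq_sum_vecMulVec [Fintype l] [DecidableEq l] [CommSemiring R]
    (U : Matrix m l R) (d : l → R) (V : Matrix l n R) :
    U * diagonal d * V = ∑ s, d s • vecMulVec (Uᵀ s) (V s) := by
  ext i j
  rw [mul_apply]
  simp only [mul_diagonal, sum_apply, smul_apply, vecMulVec_apply, transpose_apply,
    smul_eq_mul]
  exact Finset.sum_congr rfl fun s _ => by ring

theorem mul_diagonal_mul_mem_span_vecMulVec [Fintype l] [DecidableEq l] [CommSemiring R]
    (U : Matrix m l R) (d : l → R) (V : Matrix l n R) :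
    U * diagonal d * V ∈ Submodule.span R (Set.range fun s => vecMulVec (Uᵀ s) (V s)) := by
  rw [mul_diagonal_mul_eq_sum_vecMulVec]
  exact Submodule.sum_mem _ fun s _ => Submodule.smul_mem _ _ (Submodule.subset_span ⟨s, rfl⟩)

theorem mul_mem_span_vecMulVec [Fintype l] [DecidableEq l] [CommSemiring R]
    (U : Matrix m l R) (V : Matrix l n R) :
    U * V ∈ Submodule.span R (Set.range fun s => vecMulVec (Uᵀ s) (V s)) := by
  simpa using mul_diagonal_mul_mem_span_vecMulVec U 1 V

end Matrix

theorem trank_le_of_eq_sum {F : Type*} [Field F] {m1 m2 m3 k : ℕ}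
    {T : Fin m1 → Fin m2 → Fin m3 → F}
    (x : Fin k → Fin m1 → F) (y : Fin k → Fin m2 → F) (z : Fin k → Fin m3 → F)
    (h : ∀ i j l, T i j l = ∑ s, x s i * y s j * z s l) : trank T ≤ k :=
  Nat.sInf_le ⟨x, y, z, h⟩

theorem trank_le_of_slices_eq_mul_diagonal_mul {F : Type*} [Field F] {m1 m2 k : ℕ}
    (U : Matrix (Fin m1) (Fin k) F) (d : Fin k → F) (V : Matrix (Fin k) (Fin m2) F)
    (T : Fin m1 → Fin m2 → Fin 2 → F)
    (hT : ∀ i j, T i j 0 = (U * V) i j ∧ T i j 1 = (U * diagonal d * V) i j) :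
    trank T ≤ k := by
  refine trank_le_of_eq_sum (fun s i => U i s) V (fun s => ![1, d s]) fun i j =>
    Fin.forall_fin_two.2 ⟨?_, ?_⟩
  · simp [(hT i j).1, mul_apply]
  · rw [(hT i j).2, mul_diagonal_mul_eq_sum_vecMulVec, Matrix.sum_apply]
    refine Finset.sum_congr rfl fun s _ => ?_
    simp only [Matrix.smul_apply, vecMulVec_apply, transpose_apply, smul_eq_mul, cons_val_one,
      cons_val_fin_one]
    ring

theorem exists_eq_mul_and_eq_mul_diagonal_mul {n K : Type*} [Fintype n] [DecidableEq n]
    [CommRing K] {A B : Matrix n n K} (hA : IsUnit A)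
    (hdiag : ∃ P : Matrix n n K, IsUnit P ∧ (P⁻¹ * (A⁻¹ * B) * P).IsDiag) :
    ∃ (U V : Matrix n n K) (d : n → K),
      IsUnit U ∧ IsUnit V ∧ A = U * V ∧ B = U * diagonal d * V := by
  obtain ⟨P, hP, hD⟩ := hdiag
  have hAdet := (isUnit_iff_isUnit_det A).1 hA
  have hPdet := (isUnit_iff_isUnit_det P).1 hP
  refine ⟨A * P, P⁻¹, (P⁻¹ * (A⁻¹ * B) * P).diag, hA.mul hP, isUnit_nonsing_inv_iff.2 hP,
    (mul_nonsing_inv_cancel_right P A hPdet).symm, ?_⟩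
  rw [hD.diagonal_diag, Matrix.mul_assoc (A * P), mul_nonsing_inv_cancel_right _ _ hPdet,
    Matrix.mul_assoc A, mul_nonsing_inv_cancel_left _ _ hPdet,
    mul_nonsing_inv_cancel_left _ _ hAdet]

theorem stmt_14 {F : Type*} [Field F] {m : ℕ}
    (A B : Matrix (Fin m) (Fin m) F) (hA : IsUnit A)
    (hdiag : ∃ P : Matrix (Fin m) (Fin m) F, IsUnit P ∧ (P⁻¹ * (A⁻¹ * B) * P).IsDiag) :
    (∃ R : Fin m → Matrix (Fin m) (Fin m) F,
      (∀ i, (R i).rank = 1) ∧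
      A ∈ Submodule.span F (Set.range R) ∧ B ∈ Submodule.span F (Set.range R)) ∧
    (∀ T : Fin m → Fin m → Fin 2 → F,
      (∀ i j, T i j 0 = A i j ∧ T i j 1 = B i j) → trank T ≤ m) := by
  obtain ⟨U, V, d, hU, hV, rfl, rfl⟩ := exists_eq_mul_and_eq_mul_diagonal_mul hA hdiag
  refine ⟨⟨fun s => vecMulVec (Uᵀ s) (V s), fun s => ?_, mul_mem_span_vecMulVec U V,
    mul_diagonal_mul_mem_span_vecMulVec U d V⟩, trank_le_of_slices_eq_mul_diagonal_mul U d V⟩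
  exact rank_vecMulVec_of_ne_zero (transpose_ne_zero_of_isUnit hU s) (row_ne_zero_of_isUnit hV s)
end

section
/- For every m ≥ 2 there exists an (m−1)²+1-dimensional subspace L of R^{m×m} consisting of trace-zero matrices that contains no rank-one matrix. (For m = 2, 3 one may take all trace-zero matrices when (m−1)²+1 equals the relevant dimension; in general L = S_{m,0} + L_1 where S_{m,0} is the trace-zero symmetric matrices and L_1 ⊂ A_m(R) is a subspace of skew-symmetric matrices of dimension C(m−2, 2) containing no nonzero matrix of rank ≤ 2.) -/
/-!
Identify `u : Fin m → ℝ` with the polynomial `∑ uᵢ Xⁱ` of degree `< m`. The map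
`A ↦ ∑ᵢⱼ Aᵢⱼ W(Xⁱ, Xʲ)` is linear and sends a rank-one matrix `u vᵀ` to the Wronskian `W(u, v)`.
Since `W(Xⁱ, Xʲ) = (j - i) X^(i+j-1)`, its values have degree `< 2m - 3`, so together with the
trace it imposes at most `2m - 2` linear conditions, leaving a kernel of dimension at least
`m² - (2m - 2) = (m - 1)² + 1`. On the kernel, a rank-one `u vᵀ` has `W(u, v) = 0`, hence
`v = c u` (in characteristic zero a vanishing Wronskian means proportionality), and then
`0 = tr (u vᵀ) = c ‖u‖²` forces `u vᵀ = 0`.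
-/

open Matrix Polynomial Module

namespace Polynomial

theorem wronskian_mul_mul {R : Type*} [CommRing R] (c a b : R[X]) :
    wronskian (c * a) (c * b) = c ^ 2 * wronskian a b := by
  simp only [wronskian, derivative_mul]
  ring

theorem exists_eq_C_mul_of_wronskian_eq_zero {K : Type*} [Field K] [CharZero K] {p q : K[X]}
    (hp : p ≠ 0) (hw : wronskian p q = 0) : ∃ c, q = C c * p := by
  classical
  obtain ⟨g, a, b, hg, hab, rfl, rfl⟩ :
      ∃ g a b, g ≠ 0 ∧ IsCoprime a b ∧ p = g * a ∧ q = g * b :=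
    have hpq : gcd p q ≠ 0 := gcd_ne_zero_of_left hp
    ⟨_, _, _, hpq, isCoprime_div_gcd_div_gcd_of_gcd_ne_zero hpq,
      (EuclideanDomain.mul_div_cancel' hpq (gcd_dvd_left p q)).symm,
      (EuclideanDomain.mul_div_cancel' hpq (gcd_dvd_right p q)).symm⟩
  rw [wronskian_mul_mul, mul_eq_zero, or_iff_right (pow_ne_zero 2 hg),
    hab.wronskian_eq_zero_iff] at hw
  rw [eq_C_of_derivative_eq_zero hw.1] at hp ⊢
  rw [eq_C_of_derivative_eq_zero hw.2]
  have ha : a.coeff 0 ≠ 0 := fun h ↦ hp (by rw [h, C_0, mul_zero])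
  refine ⟨b.coeff 0 / a.coeff 0, ?_⟩
  rw [mul_left_comm, ← C_mul, div_mul_cancel₀ _ ha, mul_comm]

theorem wronskian_X_pow_mem_degreeLT {R : Type*} [CommRing R] [Nontrivial R] {n i j : ℕ}
    (hi : i < n) (hj : j < n) : wronskian (X ^ i : R[X]) (X ^ j) ∈ degreeLT R (2 * n - 3) := by
  rcases eq_or_ne i j with rfl | hij
  · rw [wronskian_self_eq_zero]
    exact zero_mem _
  rw [mem_degreeLT]
  refine (degree_wronskian_lt_add (monic_X_pow i).ne_zero (monic_X_pow j).ne_zero).trans_le ?_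
  rw [degree_X_pow, degree_X_pow]
  exact_mod_cast (by omega : i + j ≤ 2 * n - 3)

theorem ofFn_single {R : Type*} [CommRing R] [DecidableEq R] {n : ℕ} (i : Fin n) (c : R) :
    ofFn n (Pi.single i c) = monomial i c := by
  rw [ofFn_eq_sum_monomial, Finset.sum_eq_single i] <;> simp_all

end Polynomial

theorem Submodule.exists_le_finrank_eq {K V : Type*} [DivisionRing K] [AddCommGroup V]
    [Module K V] (N : Submodule K V) {n : ℕ} (hn : n ≤ finrank K N) :
    ∃ L ≤ N, finrank K L = n := by
  obtain ⟨f, hf⟩ := exists_linearIndependent_of_le_finrank hn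
  refine ⟨(span K (Set.range f)).map N.subtype, map_subtype_le _ _, ?_⟩
  rw [finrank_map_subtype_eq, finrank_span_eq_card hf, Fintype.card_fin]

namespace Matrix

variable {R M ι κ : Type*} [CommSemiring R] [AddCommMonoid M] [Module R M]
  [Fintype ι] [Fintype κ] [DecidableEq ι] [DecidableEq κ]

def liftBilin (B : (ι → R) →ₗ[R] (κ → R) →ₗ[R] M) : Matrix ι κ R →ₗ[R] M where
  toFun A := ∑ i, ∑ j, A i j • B (Pi.single i 1) (Pi.single j 1)
  map_add' A A' := by simp only [add_apply, add_smul, Finset.sum_add_distrib]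
  map_smul' c A := by
    simp only [smul_apply, smul_eq_mul, mul_smul, Finset.smul_sum, RingHom.id_apply]

theorem liftBilin_vecMulVec (B : (ι → R) →ₗ[R] (κ → R) →ₗ[R] M) (u : ι → R) (v : κ → R) :
    liftBilin B (vecMulVec u v) = B u v := by
  conv_rhs => rw [pi_eq_sum_univ' u, pi_eq_sum_univ' v]
  simp only [liftBilin, LinearMap.coe_mk, AddHom.coe_mk, vecMulVec_apply, map_sum, map_smul,
    LinearMap.sum_apply, LinearMap.smul_apply, Finset.smul_sum, mul_smul]
  rw [Finset.sum_comm]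
  simp only [smul_comm (v _) (u _)]

theorem exists_eq_vecMulVec_of_rank_le_one {K m n : Type*} [Field K] [Fintype n]
    {A : Matrix m n K} (hA : A.rank ≤ 1) : ∃ u v, A = vecMulVec u v := by
  have := FiniteDimensional.span_of_finite K (Set.finite_range A.col)
  rw [rank_eq_finrank_span_cols, finrank_le_one_iff] at hA
  obtain ⟨w, hw⟩ := hA
  choose c hc using fun j ↦ hw ⟨A.col j, Submodule.subset_span ⟨j, rfl⟩⟩
  refine ⟨w, c, ext fun i j ↦ ?_⟩
  simpa [vecMulVec_apply, mul_comm] using congr_fun (congr_arg Subtype.val (hc j)).symm i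

end Matrix

section WronskianKernel

variable (K : Type*) [Field K] [DecidableEq K] (n : ℕ)

noncomputable def wronskianMap : Matrix (Fin n) (Fin n) K →ₗ[K] K[X] :=
  liftBilin ((wronskianBilin K).compl₁₂ (ofFn n) (ofFn n))

noncomputable def traceZeroWronskianKer : Submodule K (Matrix (Fin n) (Fin n) K) :=
  LinearMap.ker (traceLinearMap (Fin n) K K) ⊓ LinearMap.ker (wronskianMap K n)

variable {K n}

theorem wronskianMap_vecMulVec (u v : Fin n → K) :
    wronskianMap K n (vecMulVec u v) = wronskian (ofFn n u) (ofFn n v) :=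
  liftBilin_vecMulVec _ u v

theorem wronskianMap_mem_degreeLT (A : Matrix (Fin n) (Fin n) K) :
    wronskianMap K n A ∈ degreeLT K (2 * n - 3) := by
  simp only [wronskianMap, liftBilin, LinearMap.coe_mk, AddHom.coe_mk]
  refine Submodule.sum_mem _ fun i _ ↦ Submodule.sum_mem _ fun j _ ↦ Submodule.smul_mem _ _ ?_
  simpa [ofFn_single, monomial_one_right_eq_X_pow, wronskianBilin_apply]
    using wronskian_X_pow_mem_degreeLT (R := K) i.2 j.2

theorem le_finrank_traceZeroWronskianKer (hn : 2 ≤ n) :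
    (n - 1) ^ 2 + 1 ≤ finrank K (traceZeroWronskianKer K n) := by
  let Ψ := (traceLinearMap (Fin n) K K).prod
    ((wronskianMap K n).codRestrict _ wronskianMap_mem_degreeLT)
  have hker : LinearMap.ker Ψ = traceZeroWronskianKer K n := by
    rw [LinearMap.ker_prod, LinearMap.ker_codRestrict]
    rfl
  have hrange : finrank K (LinearMap.range Ψ) ≤ 1 + (2 * n - 3) := by
    refine (Submodule.finrank_le _).trans_eq ?_
    rw [finrank_prod, finrank_self, (degreeLTEquiv K _).finrank_eq, finrank_fin_fun]
  have hsum := Ψ.finrank_range_add_finrank_ker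
  rw [hker, finrank_matrix, Fintype.card_fin, finrank_self, mul_one] at hsum
  have hdim : (n - 1) ^ 2 + 1 + (1 + (2 * n - 3)) = n * n := by
    obtain ⟨k, rfl⟩ := Nat.exists_eq_add_of_le' hn
    rw [show k + 2 - 1 = k + 1 from rfl, show 2 * (k + 2) - 3 = 2 * k + 1 by omega]
    ring
  omega

theorem rank_ne_one_of_mem_traceZeroWronskianKer [LinearOrder K] [IsStrictOrderedRing K]
    {A : Matrix (Fin n) (Fin n) K} (hA : A ∈ traceZeroWronskianKer K n) : A.rank ≠ 1 := by
  intro h1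
  obtain ⟨u, v, rfl⟩ := exists_eq_vecMulVec_of_rank_le_one h1.le
  obtain ⟨htr, hw⟩ := hA
  have hu : ofFn n u ≠ 0 := by
    intro hu0
    rw [(injective_ofFn n).eq_iff' (map_zero _)] at hu0
    simp [hu0] at h1
  rw [SetLike.mem_coe, LinearMap.mem_ker, wronskianMap_vecMulVec] at hw
  obtain ⟨c, hc⟩ := exists_eq_C_mul_of_wronskian_eq_zero hu hw
  obtain rfl : v = c • u := injective_ofFn n (by rw [map_smul, smul_eq_C_mul, hc])
  rw [SetLike.mem_coe, LinearMap.mem_ker, traceLinearMap_apply, trace_vecMulVec,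
    dotProduct_smul, smul_eq_mul, mul_eq_zero, dotProduct_self_eq_zero] at htr
  rcases htr with rfl | rfl <;> simp at h1 hu

end WronskianKernel

theorem stmt_18 (m : ℕ) (hm : 2 ≤ m) :
    ∃ L : Submodule ℝ (Matrix (Fin m) (Fin m) ℝ),
      Module.finrank ℝ L = (m - 1) ^ 2 + 1 ∧
      (∀ A ∈ L, A.trace = 0) ∧
      (∀ A ∈ L, A.rank ≠ 1) := by
  obtain ⟨L, hL, hdim⟩ :=
    (traceZeroWronskianKer ℝ m).exists_le_finrank_eq (le_finrank_traceZeroWronskianKer hm)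
  exact ⟨L, hdim, fun A hA ↦ (hL hA).1, fun A hA ↦ rank_ne_one_of_mem_traceZeroWronskianKer (hL hA)⟩
end
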